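/- Let ε ∈ (0, 1/4], let M be a positive integer with M·ε ≥ 1, and let u₀ ∈ (2ε, 1 − 2ε). Let û₀ be the empirical mean of M i.i.d. Bernoulli(u₀) random variables, and define φ⁻(v) = (u₀·(v − ε)^{−1} − u₀)/(1 − u₀) for v > ε. Then E[φ⁻(û₀) | |û₀ − u₀| < ε] ≥ 4ε/(1 − ε)²·C(M, ⌊2εM⌋)·(2ε)^M + 1, where C(M, k) denotes the binomial coefficient. -/

import Mathlib

/-!
On the event `A = {|û₀ - u₀| < ε}` we have `û₀ - ε < u₀`, which is exactly `φ⁻(û₀) ≥ 1`.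
The extra mass comes from the single atom `û₀ = ⌊u₀ M⌋ / M`, which lies in `A` because
`1 / M ≤ ε`: there `φ⁻ - 1 ≥ 4ε / (1 - ε)²` by AM-GM, and the binomial probability of the atom
is at least `C(M, ⌊2εM⌋) (2ε)^M`, since `2ε ≤ u₀, 1 - u₀` and `⌊2εM⌋` is no closer to `M / 2`
than `⌊u₀ M⌋`. Conditioning on `A` only increases the probability of the atom.
-/

open MeasureTheory ProbabilityTheory
open scoped ENNReal

/-- The Bernoulli distribution with parameter `p`, as a measure on `ℝ`
(mass `p` at `1` and mass `1 - p` at `0`). -/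
noncomputable def bernoulliReal (p : ℝ) : Measure ℝ :=
  ENNReal.ofReal p • Measure.dirac 1 + ENNReal.ofReal (1 - p) • Measure.dirac 0

theorem Nat.choose_le_choose_of_le_of_add_le {n j k : ℕ} (hjk : j ≤ k) (hjkn : j + k ≤ n) :
    n.choose j ≤ n.choose k := by
  have increasing : ∀ m, j ≤ m → m + m ≤ n → n.choose j ≤ n.choose m := fun m hjm hm ↦ by
    clear hjk hjkn
    induction hjm using Nat.decreasingInduction with
    | self => rfl
    | of_succ i hi ih => exact (Nat.choose_le_succ_of_lt_half_left (by omega)).trans ih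
  rcases le_or_gt (k + k) n with h | h
  · exact increasing k hjk h
  · rw [← Nat.choose_symm (by omega : k ≤ n)]
    exact increasing (n - k) (by omega) (by omega)

@[simp] lemma bernoulliReal_singleton_one (p : ℝ) : bernoulliReal p {1} = ENNReal.ofReal p := by
  simp [bernoulliReal]

@[simp] lemma bernoulliReal_singleton_zero (p : ℝ) :
    bernoulliReal p {0} = ENNReal.ofReal (1 - p) := by
  simp [bernoulliReal]

section IIDBernoulli

open Finset

variable {Ω ι : Type*} [DecidableEq ι] {y : ι → Ω → ℝ}

def bernoulliPattern (y : ι → Ω → ℝ) (S : Finset ι) : Set Ω :=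
  ⋂ i, y i ⁻¹' {if i ∈ S then 1 else 0}

lemma pairwiseDisjoint_bernoulliPattern :
    (Set.univ : Set (Finset ι)).PairwiseDisjoint (bernoulliPattern y) := by
  intro S _ T _ hST
  refine Set.disjoint_left.2 fun ω hS hT ↦ hST ?_
  simp only [bernoulliPattern, Set.mem_iInter, Set.mem_preimage, Set.mem_singleton_iff] at hS hT
  ext i
  have := (hS i).symm.trans (hT i)
  split_ifs at this <;> simp_all

variable [Fintype ι]

lemma sum_eq_card_of_mem_bernoulliPattern {S : Finset ι} {ω : Ω}
    (h : ω ∈ bernoulliPattern y S) : ∑ i, y i ω = #S := by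
  simp only [bernoulliPattern, Set.mem_iInter, Set.mem_preimage, Set.mem_singleton_iff] at h
  simp [h]

variable [MeasurableSpace Ω] {μ : Measure Ω} {p : ℝ}

lemma measurableSet_bernoulliPattern (hmeas : ∀ i, Measurable (y i)) (S : Finset ι) :
    MeasurableSet (bernoulliPattern y S) :=
  .iInter fun i ↦ hmeas i (measurableSet_singleton _)

lemma measure_bernoulliPattern (hmeas : ∀ i, Measurable (y i)) (hindep : iIndepFun y μ)
    (hdist : ∀ i, μ.map (y i) = bernoulliReal p) (S : Finset ι) :
    μ (bernoulliPattern y S) =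
      ENNReal.ofReal p ^ #S * ENNReal.ofReal (1 - p) ^ (Fintype.card ι - #S) := by
  have hcoord (i : ι) : μ (y i ⁻¹' {if i ∈ S then 1 else 0}) =
      if i ∈ S then ENNReal.ofReal p else ENNReal.ofReal (1 - p) := by
    rw [← Measure.map_apply (hmeas i) (measurableSet_singleton _), hdist]
    split_ifs <;> simp
  have hprod := hindep.measure_inter_preimage_eq_mul (S := univ)
    (sets := fun i ↦ {if i ∈ S then (1 : ℝ) else 0}) (fun i _ ↦ measurableSet_singleton _)
  simp only [mem_univ, Set.iInter_true] at hprod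
  rw [bernoulliPattern, hprod, prod_congr rfl fun i _ ↦ hcoord i, prod_ite]
  simp [filter_notMem_eq_sdiff, ← compl_eq_univ_sdiff, card_compl]

lemma choose_mul_le_measure_sum_eq (hmeas : ∀ i, Measurable (y i)) (hindep : iIndepFun y μ)
    (hdist : ∀ i, μ.map (y i) = bernoulliReal p) (k : ℕ) :
    (Fintype.card ι).choose k *
        (ENNReal.ofReal p ^ k * ENNReal.ofReal (1 - p) ^ (Fintype.card ι - k)) ≤
      μ {ω | ∑ i, y i ω = k} := by
  have hk (S) (hS : S ∈ powersetCard k (univ : Finset ι)) : #S = k := (mem_powersetCard.1 hS).2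
  calc _ = ∑ S ∈ powersetCard k univ, μ (bernoulliPattern y S) := by
        rw [sum_congr rfl fun S hS ↦ by rw [measure_bernoulliPattern hmeas hindep hdist, hk S hS],
          sum_const, card_powersetCard, card_univ, nsmul_eq_mul]
    _ = μ (⋃ S ∈ powersetCard k univ, bernoulliPattern y S) :=
        (measure_biUnion_finset (pairwiseDisjoint_bernoulliPattern.subset (Set.subset_univ _))
          fun S _ ↦ measurableSet_bernoulliPattern hmeas S).symm
    _ ≤ _ := measure_mono <| Set.iUnion₂_subset fun S hS ω hω ↦ by
        rw [Set.mem_ofPred_eq, sum_eq_card_of_mem_bernoulliPattern hω, hk S hS]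

lemma choose_mul_pow_le_measureReal_sum_eq [IsFiniteMeasure μ] (hmeas : ∀ i, Measurable (y i))
    (hindep : iIndepFun y μ) (hdist : ∀ i, μ.map (y i) = bernoulliReal p) (hp₀ : 0 ≤ p)
    (hp₁ : p ≤ 1) (k : ℕ) :
    (Fintype.card ι).choose k * (p ^ k * (1 - p) ^ (Fintype.card ι - k)) ≤
      μ.real {ω | ∑ i, y i ω = k} := by
  have := ENNReal.toReal_mono (measure_ne_top _ _)
    (choose_mul_le_measure_sum_eq hmeas hindep hdist (μ := μ) k)
  simpa [measureReal_def, hp₀, hp₁] using this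

end IIDBernoulli

lemma choose_floor_mul_pow_le {ε u₀ : ℝ} (hε : 0 ≤ ε) (h2ε : 2 * ε ≤ u₀) (hu₀ : u₀ ≤ 1 - 2 * ε)
    (M : ℕ) :
    (M.choose ⌊2 * ε * M⌋₊ : ℝ) * (2 * ε) ^ M ≤
      M.choose ⌊u₀ * M⌋₊ * (u₀ ^ ⌊u₀ * M⌋₊ * (1 - u₀) ^ (M - ⌊u₀ * M⌋₊)) := by
  set k := ⌊u₀ * M⌋₊
  have hu₀_nonneg : 0 ≤ u₀ := by linarith
  have hkM : k ≤ M := Nat.floor_le_of_le (by nlinarith)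
  have hj : ⌊2 * ε * M⌋₊ ≤ k := Nat.floor_le_floor (by gcongr)
  have hjk : ⌊2 * ε * M⌋₊ + k ≤ M := by
    have := Nat.floor_le (a := 2 * ε * M) (by positivity)
    have := Nat.floor_le (a := u₀ * M) (by positivity)
    exact_mod_cast (show ((⌊2 * ε * M⌋₊ + k : ℕ) : ℝ) ≤ M by push_cast; nlinarith)
  gcongr
  · exact Nat.choose_le_choose_of_le_of_add_le hj hjk
  · rw [← Nat.add_sub_cancel' hkM, pow_add, Nat.add_sub_cancel_left]
    gcongr
    linarith

lemma floor_mul_div_mem_Ioc {u ε : ℝ} {M : ℕ} (hu : 0 ≤ u) (hM : 0 < M) (hMε : 1 ≤ M * ε) :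
    (⌊u * M⌋₊ : ℝ) / M ∈ Set.Ioc (u - ε) u := by
  have hMpos : (0 : ℝ) < M := Nat.cast_pos.2 hM
  constructor
  · rw [lt_div_iff₀ hMpos]
    nlinarith [Nat.lt_floor_add_one (u * M)]
  · rw [div_le_iff₀ hMpos]
    exact Nat.floor_le (by positivity)

section PhiMinus

noncomputable def phiMinus (u₀ ε v : ℝ) : ℝ := (u₀ * (v - ε)⁻¹ - u₀) / (1 - u₀)

variable {u₀ ε v : ℝ}

@[fun_prop] lemma measurable_phiMinus : Measurable (phiMinus u₀ ε) := by
  unfold phiMinus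
  fun_prop

lemma phiMinus_sub_one (hv : ε < v) (hu₀ : u₀ < 1) :
    phiMinus u₀ ε v - 1 = (u₀ + ε - v) / ((v - ε) * (1 - u₀)) := by
  have : v - ε ≠ 0 := by linarith
  have : 1 - u₀ ≠ 0 := by linarith
  unfold phiMinus
  field_simp
  ring

lemma phiMinus_antitoneOn (hu₀ : 0 ≤ u₀) (hu₁ : u₀ < 1) :
    AntitoneOn (phiMinus u₀ ε) (Set.Ioi ε) := fun v hv w hw hvw ↦ by
  unfold phiMinus
  gcongr
  exact sub_pos.2 hv

lemma phiMinus_mem_Icc (hu₀ : 2 * ε < u₀) (hu₁ : u₀ < 1) (hv : |v - u₀| < ε) :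
    phiMinus u₀ ε v ∈ Set.Icc 1 (phiMinus u₀ ε (u₀ - ε)) := by
  obtain ⟨hv₁, hv₂⟩ := abs_sub_lt_iff.1 hv
  have hεv : ε < v := by linarith
  refine ⟨?_, phiMinus_antitoneOn (by linarith) hu₁ (Set.mem_Ioi.2 (by linarith)) hεv
    (by linarith)⟩
  have : 0 ≤ phiMinus u₀ ε v - 1 := by
    rw [phiMinus_sub_one hεv hu₁]
    exact div_nonneg (by linarith) (mul_nonneg (by linarith) (by linarith))
  linarith

lemma div_sq_le_phiMinus_sub_one (hε : 0 ≤ ε) (hv : ε < v) (hvu : v ≤ u₀) (hu₁ : u₀ < 1) :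
    4 * ε / (1 - ε) ^ 2 ≤ phiMinus u₀ ε v - 1 := by
  rw [phiMinus_sub_one hv hu₁]
  have hden : (v - ε) * (1 - u₀) ≤ (1 - ε) ^ 2 / 4 := by
    nlinarith [sq_nonneg (v - ε - (1 - u₀))]
  calc 4 * ε / (1 - ε) ^ 2 = ε / ((1 - ε) ^ 2 / 4) := by rw [div_div_eq_mul_div]; ring
    _ ≤ ε / ((v - ε) * (1 - u₀)) := by gcongr
    _ ≤ (u₀ + ε - v) / ((v - ε) * (1 - u₀)) := by
        gcongr
        linarith

end PhiMinus

section Conditioning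

variable {Ω : Type*} [MeasurableSpace Ω] {μ : Measure Ω} {A B : Set Ω}

lemma measureReal_le_cond_measureReal [IsFiniteMeasure μ] (hA : MeasurableSet A) (hBA : B ⊆ A)
    (hμA : μ A ≤ 1) : μ.real B ≤ (μ[|A]).real B := by
  refine ENNReal.toReal_mono (measure_ne_top _ _) ?_
  rw [cond_apply hA, Set.inter_eq_self_of_subset_right hBA]
  exact le_mul_of_one_le_left bot_le (ENNReal.one_le_inv.2 hμA)

lemma one_add_mul_measureReal_le_integral_cond [IsProbabilityMeasure μ] {f : Ω → ℝ} {c C : ℝ}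
    (hA : MeasurableSet A) (hB : MeasurableSet B) (hBA : B ⊆ A) (hμB : μ B ≠ 0)
    (hf : Measurable f) (hfA : ∀ ω ∈ A, f ω ∈ Set.Icc 1 C) (hfB : ∀ ω ∈ B, c ≤ f ω)
    (hc : 1 ≤ c) :
    1 + (c - 1) * μ.real B ≤ ∫ ω, f ω ∂μ[|A] := by
  have := cond_isProbabilityMeasure (fun h ↦ hμB (measure_mono_null hBA h))
  have hf_int : Integrable f μ[|A] :=
    .of_bound hf.aestronglyMeasurable C <| ae_cond_of_forall_mem hA fun ω hω ↦ by
      rw [Real.norm_of_nonneg (zero_le_one.trans (hfA ω hω).1)]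
      exact (hfA ω hω).2
  have hminorant : ∀ᵐ ω ∂μ[|A], B.indicator (fun _ ↦ c - 1) ω + 1 ≤ f ω :=
    ae_cond_of_forall_mem hA fun ω hω ↦ by
      by_cases hωB : ω ∈ B
      · simp [hωB, hfB ω hωB]
      · simp [hωB, (hfA ω hω).1]
  calc 1 + (c - 1) * μ.real B ≤ 1 + (c - 1) * (μ[|A]).real B := by
        gcongr
        exact measureReal_le_cond_measureReal hA hBA prob_le_one
    _ = ∫ ω, (B.indicator (fun _ ↦ c - 1) ω + 1) ∂μ[|A] := by
        rw [integral_add ((integrable_const _).indicator hB) (integrable_const _),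
          integral_indicator_const _ hB]
        simp [mul_comm, add_comm]
    _ ≤ ∫ ω, f ω ∂μ[|A] :=
        integral_mono_ae (((integrable_const _).indicator hB).add (integrable_const _)) hf_int
          hminorant

end Conditioning

theorem conditional_phi_minus_lower_bound_general
    {Ω : Type*} [MeasurableSpace Ω] {μ : Measure Ω} [IsProbabilityMeasure μ]
    (ε : ℝ) (hε : 0 < ε)
    (M : ℕ) (hM : 0 < M) (hMε : 1 ≤ (M : ℝ) * ε)
    (u₀ : ℝ) (hu₀ : u₀ ∈ Set.Ioo (2 * ε) (1 - 2 * ε))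
    (y : Fin M → Ω → ℝ) (hmeas : ∀ k, Measurable (y k))
    (hindep : iIndepFun y μ)
    (hdist : ∀ k, Measure.map (y k) μ = bernoulliReal u₀)
    (uhat : Ω → ℝ) (huhat : ∀ ω, uhat ω = (∑ k, y k ω) / M)
    (A : Set Ω) (hA : A = {ω | |uhat ω - u₀| < ε})
    (φm : ℝ → ℝ) (hφm : ∀ v, v > ε → φm v = (u₀ * (v - ε)⁻¹ - u₀) / (1 - u₀)) :
    4 * ε / (1 - ε) ^ 2 * (M.choose ⌊2 * ε * M⌋₊ : ℝ) * (2 * ε) ^ M + 1 ≤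
      ∫ ω, φm (uhat ω) ∂(μ[|A]) := by
  obtain ⟨h2ε, hu₀₁⟩ := hu₀
  set k₀ := ⌊u₀ * M⌋₊
  obtain ⟨hk₀_gt, hk₀_le⟩ := floor_mul_div_mem_Ioc (by linarith) hM hMε (u := u₀)
  have huhat_meas : Measurable uhat := by
    rw [funext huhat]
    fun_prop
  have hA_meas : MeasurableSet A := hA ▸ measurableSet_lt (by fun_prop) measurable_const
  have hA_mem : ∀ ω ∈ A, |uhat ω - u₀| < ε := fun ω hω ↦ by rwa [hA] at hω
  set B := {ω | ∑ k, y k ω = k₀}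
  have huhat_B : ∀ ω ∈ B, uhat ω = k₀ / M := fun ω hω ↦ by rw [huhat, hω]
  have hBA : B ⊆ A := fun ω hω ↦ by
    rw [hA, Set.mem_ofPred_eq, huhat_B ω hω, abs_sub_lt_iff]
    constructor <;> linarith
  have hμB : (M.choose ⌊2 * ε * M⌋₊ : ℝ) * (2 * ε) ^ M ≤ μ.real B := by
    refine (choose_floor_mul_pow_le hε.le h2ε.le hu₀₁.le M).trans ?_
    simpa using choose_mul_pow_le_measureReal_sum_eq hmeas hindep hdist (by linarith)
      (by linarith) k₀
  have hμB_pos : μ B ≠ 0 := by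
    have := Nat.choose_pos (Nat.floor_le_of_le (n := M) (a := 2 * ε * M) (by nlinarith))
    exact (measureReal_ne_zero_iff).1 (lt_of_lt_of_le (by positivity) hμB).ne'
  have hc : 4 * ε / (1 - ε) ^ 2 ≤ phiMinus u₀ ε (k₀ / M) - 1 :=
    div_sq_le_phiMinus_sub_one hε.le (by linarith) hk₀_le (by linarith)
  have hc_nonneg : 0 ≤ phiMinus u₀ ε (k₀ / M) - 1 := le_trans (by positivity) hc
  calc _ ≤ 1 + (phiMinus u₀ ε (k₀ / M) - 1) * μ.real B := by
        rw [mul_assoc, add_comm]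
        gcongr
    _ ≤ ∫ ω, phiMinus u₀ ε (uhat ω) ∂μ[|A] :=
        one_add_mul_measureReal_le_integral_cond hA_meas (measurableSet_eq_fun (by fun_prop)
          measurable_const) hBA hμB_pos (by fun_prop)
          (fun ω hω ↦ phiMinus_mem_Icc h2ε (by linarith) (hA_mem ω hω))
          (fun ω hω ↦ by rw [huhat_B ω hω]) (by linarith)
    _ = ∫ ω, φm (uhat ω) ∂μ[|A] := integral_congr_ae <| ae_cond_of_forall_mem hA_meas
        fun ω hω ↦ (hφm _ (by linarith [abs_sub_lt_iff.1 (hA_mem ω hω)])).symm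

/-- **Bound from the proof of Theorem 2 yielding `C₁⁻`**: with `û₀` the empirical
mean of `M` i.i.d. Bernoulli(`u₀`) variables, `A = {|û₀ - u₀| < ε}` and
`φ⁻(v) = (u₀ (v - ε)⁻¹ - u₀) / (1 - u₀)` (so that `φ⁻(û₀) = exp (r̂⁻(û₀))`),
`E[φ⁻(û₀) | A] ≥ 4ε / (1 - ε)² · C(M, ⌊2εM⌋) · (2ε)^M + 1`. -/
theorem conditional_phi_minus_lower_bound
    {Ω : Type*} [MeasurableSpace Ω] {μ : Measure Ω} [IsProbabilityMeasure μ]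
    (ε : ℝ) (hε : 0 < ε) (hε4 : ε ≤ 1 / 4)
    (M : ℕ) (hM : 0 < M) (hMε : 1 ≤ (M : ℝ) * ε)
    (u₀ : ℝ) (hu₀ : u₀ ∈ Set.Ioo (2 * ε) (1 - 2 * ε))
    (y : Fin M → Ω → ℝ) (hmeas : ∀ k, Measurable (y k))
    (hindep : iIndepFun y μ)
    (hdist : ∀ k, Measure.map (y k) μ = bernoulliReal u₀)
    (uhat : Ω → ℝ) (huhat : ∀ ω, uhat ω = (∑ k, y k ω) / M)
    (A : Set Ω) (hA : A = {ω | |uhat ω - u₀| < ε})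
    (φm : ℝ → ℝ) (hφm : ∀ v, v > ε → φm v = (u₀ * (v - ε)⁻¹ - u₀) / (1 - u₀)) :
    4 * ε / (1 - ε) ^ 2 * (M.choose ⌊2 * ε * M⌋₊ : ℝ) * (2 * ε) ^ M + 1 ≤
      ∫ ω, φm (uhat ω) ∂(μ[|A]) :=
  conditional_phi_minus_lower_bound_general ε hε M hM hMε u₀ hu₀ y hmeas hindep hdist uhat huhat A
    hA φm hφm
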